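/- Let F₀, s : ℝ² → ℝ be real analytic with ∂F₀/∂H₂(0) ≠ 0. Then the Arnol'd determinant grows infinitely large near the origin: det Dω(H) → +∞ as H → 0 within the slit plane P. -/

import Mathlib

open Real Filter Topology MeasureTheory

/-- The Euclidean norm `|H| = √(H₁² + H₂²)` on `ℝ²`. -/
noncomputable def nrm (H : ℝ × ℝ) : ℝ := Real.sqrt (H.1 ^ 2 + H.2 ^ 2)

/-- The slit plane `P = ℝ² \ {(t,0) : t ≥ 0}`. -/
def slitP : Set (ℝ × ℝ) := {H | ¬ (0 ≤ H.1 ∧ H.2 = 0)}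

/-- The branch of the polar angle with values in `(0, 2π)` on the slit plane:
`argS (r cos θ, r sin θ) = θ` for `r > 0`, `θ ∈ (0, 2π)`. -/
noncomputable def argS (H : ℝ × ℝ) : ℝ :=
  Real.pi + Complex.arg (-(H.1 + H.2 * Complex.I))

/-- The partial derivative with respect to the first variable. -/
noncomputable def pd₁ (f : ℝ × ℝ → ℝ) (H : ℝ × ℝ) : ℝ := fderiv ℝ f H (1, 0)

/-- The partial derivative with respect to the second variable. -/
noncomputable def pd₂ (f : ℝ × ℝ → ℝ) (H : ℝ × ℝ) : ℝ := fderiv ℝ f H (0, 1)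

/-- `D(H) = (1/(2π))(ln|H| + 1) + ∂s/∂H₂(H)`. -/
noncomputable def Dfun (s : ℝ × ℝ → ℝ) (H : ℝ × ℝ) : ℝ :=
  (1 / (2 * Real.pi)) * (Real.log (nrm H) + 1) + pd₂ s H

/-- First component of the frequency map. -/
noncomputable def ω₁ (F₀ s : ℝ × ℝ → ℝ) (H : ℝ × ℝ) : ℝ :=
  pd₁ F₀ H - pd₂ F₀ H * ((1 / (2 * Real.pi)) * argS H + pd₁ s H) / Dfun s H

/-- Second component of the frequency map. -/
noncomputable def ω₂ (F₀ s : ℝ × ℝ → ℝ) (H : ℝ × ℝ) : ℝ :=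
  pd₂ F₀ H / Dfun s H

/-- The Jacobian matrix `Dω(H)` of the frequency map, with entries `∂ωᵢ/∂Hⱼ(H)`. -/
noncomputable def Dω (F₀ s : ℝ × ℝ → ℝ) (H : ℝ × ℝ) : Matrix (Fin 2) (Fin 2) ℝ :=
  !![pd₁ (ω₁ F₀ s) H, pd₂ (ω₁ F₀ s) H;
     pd₁ (ω₂ F₀ s) H, pd₂ (ω₂ F₀ s) H]

/-! ### Auxiliary material for `stmt9` -/

section Stmt9Aux

lemma stmt9_q_pos_of_slit {H : ℝ × ℝ} (hH : H ∈ slitP) : 0 < H.1 ^ 2 + H.2 ^ 2 := by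
  rcases lt_or_ge H.1 0 with h | h
  · nlinarith
  · have h2 : H.2 ≠ 0 := fun h2 => hH ⟨h, h2⟩
    have h3 : 0 < H.2 ^ 2 := by positivity
    nlinarith

lemma stmt9_pdd₁ {f : ℝ × ℝ → ℝ} {ℓ : ℝ × ℝ →L[ℝ] ℝ} {H : ℝ × ℝ} (h : HasFDerivAt f ℓ H) :
    pd₁ f H = ℓ (1, 0) := by rw [pd₁, h.fderiv]

lemma stmt9_pdd₂ {f : ℝ × ℝ → ℝ} {ℓ : ℝ × ℝ →L[ℝ] ℝ} {H : ℝ × ℝ} (h : HasFDerivAt f ℓ H) :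
    pd₂ f H = ℓ (0, 1) := by rw [pd₂, h.fderiv]

lemma stmt9_analytic_pd {f : ℝ × ℝ → ℝ} (hf : ∀ x, AnalyticAt ℝ f x) (v : ℝ × ℝ) (x : ℝ × ℝ) :
    AnalyticAt ℝ (fun H => fderiv ℝ f H v) x := by
  have h : AnalyticOnNhd ℝ f Set.univ := fun y _ => hf y
  exact ((ContinuousLinearMap.apply ℝ ℝ v).comp_analyticOnNhd h.fderiv) x trivial

lemma stmt9_analytic_pd₁ {f : ℝ × ℝ → ℝ} (hf : ∀ x, AnalyticAt ℝ f x) (x : ℝ × ℝ) :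
    AnalyticAt ℝ (pd₁ f) x := stmt9_analytic_pd hf (1, 0) x

lemma stmt9_analytic_pd₂ {f : ℝ × ℝ → ℝ} (hf : ∀ x, AnalyticAt ℝ f x) (x : ℝ × ℝ) :
    AnalyticAt ℝ (pd₂ f) x := stmt9_analytic_pd hf (0, 1) x

lemma stmt9_hasFDerivAt_q (H : ℝ × ℝ) :
    HasFDerivAt (fun H : ℝ × ℝ => H.1 ^ 2 + H.2 ^ 2)
      ((2 * H.1) • ContinuousLinearMap.fst ℝ ℝ ℝ + (2 * H.2) • ContinuousLinearMap.snd ℝ ℝ ℝ) H := by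
  have hfun : (fun H : ℝ × ℝ => H.1 ^ 2 + H.2 ^ 2) = fun H : ℝ × ℝ => H.1 * H.1 + H.2 * H.2 := by
    funext v; ring
  rw [hfun]
  have h := ((hasFDerivAt_fst (𝕜 := ℝ) (p := H)).mul (hasFDerivAt_fst (𝕜 := ℝ) (p := H))).add
    ((hasFDerivAt_snd (𝕜 := ℝ) (p := H)).mul (hasFDerivAt_snd (𝕜 := ℝ) (p := H)))
  refine h.congr_fderiv ?_
  ext v <;> simp <;> ring

lemma stmt9_hasFDerivAt_logq (H : ℝ × ℝ) (hq : H.1 ^ 2 + H.2 ^ 2 ≠ 0) :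
    HasFDerivAt (fun H : ℝ × ℝ => Real.log (nrm H))
      ((H.1 / (H.1 ^ 2 + H.2 ^ 2)) • ContinuousLinearMap.fst ℝ ℝ ℝ
        + (H.2 / (H.1 ^ 2 + H.2 ^ 2)) • ContinuousLinearMap.snd ℝ ℝ ℝ) H := by
  have hfun : (fun H : ℝ × ℝ => Real.log (nrm H))
      = fun H : ℝ × ℝ => (1 / 2) * Real.log (H.1 ^ 2 + H.2 ^ 2) := by
    funext H; rw [nrm, Real.log_sqrt (by positivity)]; ring
  rw [hfun]
  have h := ((Real.hasDerivAt_log hq).comp_hasFDerivAt H (stmt9_hasFDerivAt_q H)).const_mul (1 / 2)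
  refine h.congr_fderiv ?_
  ext v <;> simp <;> field_simp

lemma stmt9_hasFDerivAt_argS (H : ℝ × ℝ) (hH : H ∈ slitP) :
    HasFDerivAt argS
      ((-H.2 / (H.1 ^ 2 + H.2 ^ 2)) • ContinuousLinearMap.fst ℝ ℝ ℝ
        + (H.1 / (H.1 ^ 2 + H.2 ^ 2)) • ContinuousLinearMap.snd ℝ ℝ ℝ) H := by
  set m : ℝ × ℝ →L[ℝ] ℂ :=
    Complex.ofRealCLM.comp (ContinuousLinearMap.fst ℝ ℝ ℝ)
      + (ContinuousLinearMap.snd ℝ ℝ ℝ).smulRight Complex.I with hm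
  have hmap : ∀ v : ℝ × ℝ, m v = v.1 + v.2 * Complex.I := by
    intro v; simp [hm, Complex.real_smul]
  have hz : -(↑H.1 + ↑H.2 * Complex.I) ∈ Complex.slitPlane := by
    rw [Complex.mem_slitPlane_iff]
    simp only [Complex.neg_re, Complex.neg_im, Complex.add_re, Complex.add_im,
      Complex.ofReal_re, Complex.ofReal_im, Complex.mul_re, Complex.mul_im,
      Complex.I_re, Complex.I_im]
    rcases lt_or_ge H.1 0 with h | h
    · left; simpa using h
    · right
      have h2 : H.2 ≠ 0 := fun h2 => hH ⟨h, h2⟩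
      simpa using h2
  have hfun : argS = fun H : ℝ × ℝ => Real.pi + (Complex.log (-(m H))).im := by
    funext v; rw [argS, hmap, Complex.log_im]
  rw [hfun]
  have hmd : HasFDerivAt (fun H : ℝ × ℝ => -(m H)) (-m) H := (m.hasFDerivAt).neg
  have hzz : -(m H) ∈ Complex.slitPlane := by rw [hmap]; exact hz
  have hlog : HasFDerivAt Complex.log
      (ContinuousLinearMap.smulRight (1 : ℂ →L[ℂ] ℂ) (-(m H))⁻¹) (-(m H)) :=
    (Complex.hasDerivAt_log hzz).hasFDerivAt
  have hcomp := ((hlog.restrictScalars ℝ).comp H hmd)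
  have him := (Complex.imCLM.hasFDerivAt (x := Complex.log (-(m H)))).comp H hcomp
  have hfin := him.const_add Real.pi
  refine hfin.congr_fderiv ?_
  have hq : H.1 ^ 2 + H.2 ^ 2 ≠ 0 := ne_of_gt (stmt9_q_pos_of_slit hH)
  ext v
  · have h1 : (ContinuousLinearMap.inl ℝ ℝ ℝ) (1:ℝ) = ((1:ℝ), (0:ℝ)) := rfl
    simp only [ContinuousLinearMap.add_apply, ContinuousLinearMap.coe_smul', Pi.smul_apply,
      ContinuousLinearMap.coe_comp', Function.comp_apply, ContinuousLinearMap.coe_fst',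
      ContinuousLinearMap.coe_snd', smul_eq_mul, ContinuousLinearMap.smulRight_apply,
      ContinuousLinearMap.one_apply, ContinuousLinearMap.coe_restrictScalars',
      ContinuousLinearMap.neg_apply, Complex.imCLM_apply]
    rw [h1, hmap, inv_neg, neg_mul_neg, ← div_eq_mul_inv]
    simp [Complex.div_im, Complex.normSq_apply, hmap]
    ring
  · have h1 : (ContinuousLinearMap.inr ℝ ℝ ℝ) (1:ℝ) = ((0:ℝ), (1:ℝ)) := rfl
    simp only [ContinuousLinearMap.add_apply, ContinuousLinearMap.coe_smul', Pi.smul_apply,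
      ContinuousLinearMap.coe_comp', Function.comp_apply, ContinuousLinearMap.coe_fst',
      ContinuousLinearMap.coe_snd', smul_eq_mul, ContinuousLinearMap.smulRight_apply,
      ContinuousLinearMap.one_apply, ContinuousLinearMap.coe_restrictScalars',
      ContinuousLinearMap.neg_apply, Complex.imCLM_apply]
    rw [h1, hmap, inv_neg, neg_mul_neg, ← div_eq_mul_inv]
    simp [Complex.div_im, Complex.normSq_apply, hmap]
    ring


lemma stmt9_base1 (m : ℕ) :
    Filter.Tendsto (fun y : ℝ => y ^ m * Real.exp (-(((1 : ℕ) : ℝ) * y))) Filter.atTop (nhds 0) := by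
  simpa using tendsto_pow_mul_exp_neg_atTop_nhds_zero m

lemma stmt9_base2 (m : ℕ) :
    Filter.Tendsto (fun y : ℝ => y ^ m * Real.exp (-(((2 : ℕ) : ℝ) * y))) Filter.atTop (nhds 0) := by
  push_cast
  have h1 := (tendsto_pow_mul_exp_neg_atTop_nhds_zero m).mul
    (Real.tendsto_exp_atBot.comp tendsto_neg_atTop_atBot)
  simp only [mul_zero] at h1
  apply h1.congr
  intro y
  simp only [Function.comp]
  rw [mul_assoc, ← Real.exp_add]
  ring_nf

lemma stmt9_pow_log (k m : ℕ)
    (hbase : Filter.Tendsto (fun y : ℝ => y ^ m * Real.exp (-((k : ℝ) * y)))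
      Filter.atTop (nhds 0)) :
    Filter.Tendsto (fun x : ℝ => x ^ k * Real.log x ^ m) (nhdsWithin 0 (Set.Ioi 0)) (nhds 0) := by
  have hlog : Filter.Tendsto (fun x : ℝ => -Real.log x) (nhdsWithin 0 (Set.Ioi 0)) Filter.atTop :=
    tendsto_neg_atBot_atTop.comp Real.tendsto_log_nhdsGT_zero
  have h2 := hbase.comp hlog
  have h3 := h2.const_mul ((-1 : ℝ) ^ m)
  rw [mul_zero] at h3
  apply h3.congr'
  filter_upwards [self_mem_nhdsWithin] with x hx
  have hx' : (0 : ℝ) < x := hx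
  simp only [Function.comp]
  have e1 : Real.exp (-((k : ℝ) * -Real.log x)) = x ^ k := by
    rw [show -((k : ℝ) * -Real.log x) = (k : ℝ) * Real.log x by ring]
    rw [Real.exp_nat_mul, Real.exp_log hx']
  rw [e1]
  ring_nf
  rw [show m * 2 = 2 * m from mul_comm m 2, pow_mul]
  norm_num

/-- The explicit polynomial expression equal to `det Dω · (q · D³)`. -/
noncomputable def stmt9Phi (F₀ s : ℝ × ℝ → ℝ) (H : ℝ × ℝ) : ℝ :=
  -(pd₂ F₀ H) ^ 2 * (1 / (2 * Real.pi)) ^ 2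
  + (H.1 ^ 2 + H.2 ^ 2) * (Dfun s H) ^ 2
      * (pd₁ (pd₁ F₀) H * pd₂ (pd₂ F₀) H - pd₂ (pd₁ F₀) H * pd₁ (pd₂ F₀) H)
  + (Dfun s H * H.2) * (pd₂ F₀ H * (1 / (2 * Real.pi)) * (pd₂ (pd₂ F₀) H - pd₁ (pd₁ F₀) H))
  + (Dfun s H * H.1) * (pd₂ F₀ H * (1 / (2 * Real.pi)) * (pd₂ (pd₁ F₀) H + pd₁ (pd₂ F₀) H))
  + ((H.1 ^ 2 + H.2 ^ 2) * Dfun s H) * (pd₂ F₀ H *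
      (-(pd₁ (pd₁ F₀) H) * pd₂ (pd₂ s) H + pd₂ (pd₁ F₀) H * pd₁ (pd₂ s) H
        - pd₁ (pd₁ s) H * pd₂ (pd₂ F₀) H + pd₂ (pd₁ s) H * pd₁ (pd₂ F₀) H))
  + H.2 * ((pd₂ F₀ H) ^ 2 * (1 / (2 * Real.pi)) * (pd₁ (pd₁ s) H - pd₂ (pd₂ s) H))
  + H.1 * ((pd₂ F₀ H) ^ 2 * (1 / (2 * Real.pi)) * (-(pd₁ (pd₂ s) H) - pd₂ (pd₁ s) H))
  + (H.1 ^ 2 + H.2 ^ 2) * ((pd₂ F₀ H) ^ 2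
      * (pd₁ (pd₁ s) H * pd₂ (pd₂ s) H - pd₂ (pd₁ s) H * pd₁ (pd₂ s) H))

set_option maxHeartbeats 3000000 in
lemma stmt9_det_key (F₀ s : ℝ × ℝ → ℝ) (hF : ∀ x, AnalyticAt ℝ F₀ x)
    (hs : ∀ x, AnalyticAt ℝ s x) (H : ℝ × ℝ) (hH : H ∈ slitP) (hD : Dfun s H ≠ 0) :
    (Dω F₀ s H).det * ((H.1 ^ 2 + H.2 ^ 2) * Dfun s H ^ 3) = stmt9Phi F₀ s H := by
  have hq : H.1 ^ 2 + H.2 ^ 2 ≠ 0 := ne_of_gt (stmt9_q_pos_of_slit hH)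
  -- derivatives of the analytic ingredients
  have had : HasFDerivAt (pd₁ F₀) (fderiv ℝ (pd₁ F₀) H) H :=
    ((stmt9_analytic_pd₁ hF H).differentiableAt).hasFDerivAt
  have hbd : HasFDerivAt (pd₂ F₀) (fderiv ℝ (pd₂ F₀) H) H :=
    ((stmt9_analytic_pd₂ hF H).differentiableAt).hasFDerivAt
  have hs1d : HasFDerivAt (pd₁ s) (fderiv ℝ (pd₁ s) H) H :=
    ((stmt9_analytic_pd₁ hs H).differentiableAt).hasFDerivAt
  have hs2d : HasFDerivAt (pd₂ s) (fderiv ℝ (pd₂ s) H) H :=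
    ((stmt9_analytic_pd₂ hs H).differentiableAt).hasFDerivAt
  -- derivative of D
  have hDf : HasFDerivAt (Dfun s)
      ((1 / (2 * Real.pi)) • ((H.1 / (H.1 ^ 2 + H.2 ^ 2)) • ContinuousLinearMap.fst ℝ ℝ ℝ
          + (H.2 / (H.1 ^ 2 + H.2 ^ 2)) • ContinuousLinearMap.snd ℝ ℝ ℝ)
        + fderiv ℝ (pd₂ s) H) H := by
    exact (((stmt9_hasFDerivAt_logq H hq).add_const 1).const_mul (1 / (2 * Real.pi))).add hs2d
  have hθ := stmt9_hasFDerivAt_argS H hH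
  -- derivative of D⁻¹
  have hinv := (hasDerivAt_inv hD).comp_hasFDerivAt H hDf
  -- ω₂ = b * D⁻¹
  have hw2fun : ω₂ F₀ s = fun y => pd₂ F₀ y * (Dfun s y)⁻¹ := by
    funext y; rw [ω₂, div_eq_mul_inv]
  have hω₂ : HasFDerivAt (ω₂ F₀ s)
      (pd₂ F₀ H • ((-(Dfun s H ^ 2)⁻¹) •
          ((1 / (2 * Real.pi)) • ((H.1 / (H.1 ^ 2 + H.2 ^ 2)) • ContinuousLinearMap.fst ℝ ℝ ℝ
              + (H.2 / (H.1 ^ 2 + H.2 ^ 2)) • ContinuousLinearMap.snd ℝ ℝ ℝ)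
            + fderiv ℝ (pd₂ s) H))
        + (Dfun s H)⁻¹ • fderiv ℝ (pd₂ F₀) H) H := by
    rw [hw2fun]; exact hbd.mul hinv
  -- u = c·argS + s₁ and ω₁ = a - (b*u) * D⁻¹
  have hu : HasFDerivAt (fun y : ℝ × ℝ => (1 / (2 * Real.pi)) * argS y + pd₁ s y)
      ((1 / (2 * Real.pi)) • ((-H.2 / (H.1 ^ 2 + H.2 ^ 2)) • ContinuousLinearMap.fst ℝ ℝ ℝ
          + (H.1 / (H.1 ^ 2 + H.2 ^ 2)) • ContinuousLinearMap.snd ℝ ℝ ℝ)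
        + fderiv ℝ (pd₁ s) H) H :=
    (hθ.const_mul (1 / (2 * Real.pi))).add hs1d
  have hw1fun : ω₁ F₀ s = fun y => pd₁ F₀ y
      - pd₂ F₀ y * ((1 / (2 * Real.pi)) * argS y + pd₁ s y) * (Dfun s y)⁻¹ := by
    funext y; rw [ω₁, div_eq_mul_inv]
  have hω₁ : HasFDerivAt (ω₁ F₀ s)
      (fderiv ℝ (pd₁ F₀) H -
        ((pd₂ F₀ H * ((1 / (2 * Real.pi)) * argS H + pd₁ s H)) • ((-(Dfun s H ^ 2)⁻¹) •
            ((1 / (2 * Real.pi)) • ((H.1 / (H.1 ^ 2 + H.2 ^ 2)) • ContinuousLinearMap.fst ℝ ℝ ℝ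
                + (H.2 / (H.1 ^ 2 + H.2 ^ 2)) • ContinuousLinearMap.snd ℝ ℝ ℝ)
              + fderiv ℝ (pd₂ s) H))
          + (Dfun s H)⁻¹ •
            (pd₂ F₀ H • ((1 / (2 * Real.pi)) •
                ((-H.2 / (H.1 ^ 2 + H.2 ^ 2)) • ContinuousLinearMap.fst ℝ ℝ ℝ
                  + (H.1 / (H.1 ^ 2 + H.2 ^ 2)) • ContinuousLinearMap.snd ℝ ℝ ℝ)
              + fderiv ℝ (pd₁ s) H)
            + ((1 / (2 * Real.pi)) * argS H + pd₁ s H) • fderiv ℝ (pd₂ F₀) H))) H := by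
    rw [hw1fun]; exact had.sub ((hbd.mul hu).mul hinv)
  -- evaluate the four partial derivatives
  have p1 := stmt9_pdd₁ hω₂
  have p2 := stmt9_pdd₂ hω₂
  have p3 := stmt9_pdd₁ hω₁
  have p4 := stmt9_pdd₂ hω₁
  simp only [ContinuousLinearMap.add_apply, ContinuousLinearMap.coe_smul', Pi.smul_apply,
    ContinuousLinearMap.coe_comp', Function.comp_apply, ContinuousLinearMap.coe_fst',
    ContinuousLinearMap.coe_snd', smul_eq_mul, ContinuousLinearMap.smulRight_apply,
    ContinuousLinearMap.one_apply, ContinuousLinearMap.coe_sub', Pi.sub_apply,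
    mul_one, mul_zero, add_zero, zero_add] at p1 p2 p3 p4
  rw [Dω, Matrix.det_fin_two_of, p1, p2, p3, p4, stmt9Phi]
  simp only [pd₁, pd₂]
  field_simp
  ring

end Stmt9Aux

/-- If `F₀`, `s` are real analytic and `∂F₀/∂H₂(0) ≠ 0`, the Arnol'd determinant
`det Dω(H)` tends to `+∞` as `H → 0` within the slit plane. -/
theorem stmt9 (F₀ s : ℝ × ℝ → ℝ) (hF : ∀ x, AnalyticAt ℝ F₀ x)
    (hs : ∀ x, AnalyticAt ℝ s x) (hb : pd₂ F₀ (0, 0) ≠ 0) :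
    Tendsto (fun H : ℝ × ℝ => (Dω F₀ s H).det) (𝓝[slitP] (0, 0)) atTop := by
  set l : Filter (ℝ × ℝ) := 𝓝[slitP] (0, 0) with hl
  set c : ℝ := 1 / (2 * Real.pi) with hc
  have hcpos : 0 < c := by positivity
  -- eventual membership / positivity
  have hsl : ∀ᶠ H in l, H ∈ slitP := eventually_mem_nhdsWithin
  have hq_pos : ∀ᶠ H in l, 0 < H.1 ^ 2 + H.2 ^ 2 := hsl.mono fun H h => stmt9_q_pos_of_slit h
  -- nrm tends to 0 within (0,∞)
  have hnrm_cont : Continuous nrm :=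
    Real.continuous_sqrt.comp ((continuous_fst.pow 2).add (continuous_snd.pow 2))
  have hnrm : Tendsto nrm l (𝓝[>] 0) := by
    rw [tendsto_nhdsWithin_iff]
    constructor
    · have h0 : nrm (0, 0) = 0 := by simp [nrm]
      have := (hnrm_cont.tendsto (0, 0)).mono_left (nhdsWithin_le_nhds (s := slitP))
      rwa [h0] at this
    · exact hsl.mono fun H h => Real.sqrt_pos.mpr (stmt9_q_pos_of_slit h)
  have hq_eq : ∀ H : ℝ × ℝ, nrm H ^ 2 = H.1 ^ 2 + H.2 ^ 2 := fun H =>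
    Real.sq_sqrt (by positivity)
  -- N^k L^m → 0
  have hN1 : ∀ m : ℕ, Tendsto (fun H => nrm H * Real.log (nrm H) ^ m) l (𝓝 0) := by
    intro m
    have := (stmt9_pow_log 1 m (stmt9_base1 m)).comp hnrm
    simpa [Function.comp_def] using this
  have hN2 : ∀ m : ℕ, Tendsto (fun H => nrm H ^ 2 * Real.log (nrm H) ^ m) l (𝓝 0) := by
    intro m
    have := (stmt9_pow_log 2 m (stmt9_base2 m)).comp hnrm
    simpa [Function.comp_def] using this
  -- continuity of analytic second derivatives along l
  have hTl : ∀ (g : ℝ × ℝ → ℝ), (∀ x, AnalyticAt ℝ g x) →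
      Tendsto g l (𝓝 (g (0, 0))) := fun g hg =>
    ((hg (0, 0)).continuousAt.tendsto).mono_left nhdsWithin_le_nhds
  have hB := hTl (pd₂ F₀) (stmt9_analytic_pd₂ hF)
  have hA1 := hTl (pd₁ (pd₁ F₀)) (stmt9_analytic_pd₁ (stmt9_analytic_pd₁ hF))
  have hA2 := hTl (pd₂ (pd₁ F₀)) (stmt9_analytic_pd₂ (stmt9_analytic_pd₁ hF))
  have hB1 := hTl (pd₁ (pd₂ F₀)) (stmt9_analytic_pd₁ (stmt9_analytic_pd₂ hF))
  have hB2 := hTl (pd₂ (pd₂ F₀)) (stmt9_analytic_pd₂ (stmt9_analytic_pd₂ hF))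
  have hT1 := hTl (pd₁ (pd₁ s)) (stmt9_analytic_pd₁ (stmt9_analytic_pd₁ hs))
  have hT2 := hTl (pd₂ (pd₁ s)) (stmt9_analytic_pd₂ (stmt9_analytic_pd₁ hs))
  have hW1 := hTl (pd₁ (pd₂ s)) (stmt9_analytic_pd₁ (stmt9_analytic_pd₂ hs))
  have hW2 := hTl (pd₂ (pd₂ s)) (stmt9_analytic_pd₂ (stmt9_analytic_pd₂ hs))
  have hS2 := hTl (pd₂ s) (stmt9_analytic_pd₂ hs)
  -- the bounded part of D
  set W : ℝ × ℝ → ℝ := fun H => c + pd₂ s H with hW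
  have hWt : Tendsto W l (𝓝 (c + pd₂ s (0, 0))) := tendsto_const_nhds.add hS2
  have hDW : ∀ H : ℝ × ℝ, Dfun s H = c * Real.log (nrm H) + W H := by
    intro H; rw [Dfun, hW]; ring
  -- D → -∞
  have hL_bot : Tendsto (fun H => Real.log (nrm H)) l atBot :=
    Real.tendsto_log_nhdsGT_zero.comp hnrm
  have hD_bot : Tendsto (Dfun s) l atBot := by
    have h1 : Tendsto (fun H => c * Real.log (nrm H)) l atBot :=
      hL_bot.const_mul_atBot hcpos
    have h2 : ∀ᶠ H in l, W H ≤ c + pd₂ s (0, 0) + 1 :=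
      hWt.eventually_le_const (lt_add_one _)
    have h3 := tendsto_atBot_add_left_of_ge' (l := l)
      (f := W) (g := fun H => c * Real.log (nrm H)) (c + pd₂ s (0, 0) + 1) h2 h1
    apply h3.congr'
    filter_upwards with H
    rw [hDW H]; ring
  have hDneg : ∀ᶠ H in l, Dfun s H < 0 := hD_bot.eventually (eventually_lt_atBot 0)
  -- product limits
  have hq0 : Tendsto (fun H : ℝ × ℝ => H.1 ^ 2 + H.2 ^ 2) l (𝓝 0) := by
    have := hN2 0
    simp only [pow_zero, mul_one] at this
    apply this.congr
    intro H; rw [hq_eq H]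
  have hqD1 : Tendsto (fun H => (H.1 ^ 2 + H.2 ^ 2) * Dfun s H) l (𝓝 0) := by
    have hexp : (fun H => (H.1 ^ 2 + H.2 ^ 2) * Dfun s H)
        = fun H => c * (nrm H ^ 2 * Real.log (nrm H) ^ 1)
            + (nrm H ^ 2 * Real.log (nrm H) ^ 0) * W H := by
      funext H; rw [← hq_eq H, hDW H]; ring
    rw [hexp]
    have := (((hN2 1).const_mul c)).add ((hN2 0).mul hWt)
    simpa using this
  have hqD2 : Tendsto (fun H => (H.1 ^ 2 + H.2 ^ 2) * Dfun s H ^ 2) l (𝓝 0) := by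
    have hexp : (fun H => (H.1 ^ 2 + H.2 ^ 2) * Dfun s H ^ 2)
        = fun H => c ^ 2 * (nrm H ^ 2 * Real.log (nrm H) ^ 2)
            + (2 * c) * (nrm H ^ 2 * Real.log (nrm H) ^ 1) * W H
            + (nrm H ^ 2 * Real.log (nrm H) ^ 0) * W H ^ 2 := by
      funext H; rw [← hq_eq H, hDW H]; ring
    rw [hexp]
    have := ((((hN2 2).const_mul (c ^ 2))).add
      ((((hN2 1).const_mul (2 * c))).mul hWt)).add ((hN2 0).mul (hWt.pow 2))
    simpa using this
  have hqD3 : Tendsto (fun H => (H.1 ^ 2 + H.2 ^ 2) * Dfun s H ^ 3) l (𝓝 0) := by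
    have hexp : (fun H => (H.1 ^ 2 + H.2 ^ 2) * Dfun s H ^ 3)
        = fun H => c ^ 3 * (nrm H ^ 2 * Real.log (nrm H) ^ 3)
            + (3 * c ^ 2) * (nrm H ^ 2 * Real.log (nrm H) ^ 2) * W H
            + (3 * c) * (nrm H ^ 2 * Real.log (nrm H) ^ 1) * W H ^ 2
            + (nrm H ^ 2 * Real.log (nrm H) ^ 0) * W H ^ 3 := by
      funext H; rw [← hq_eq H, hDW H]; ring
    rw [hexp]
    have := (((((hN2 3).const_mul (c ^ 3))).add
      ((((hN2 2).const_mul (3 * c ^ 2))).mul hWt)).add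
      ((((hN2 1).const_mul (3 * c))).mul (hWt.pow 2))).add ((hN2 0).mul (hWt.pow 3))
    simpa using this
  have hND : Tendsto (fun H => nrm H * Dfun s H) l (𝓝 0) := by
    have hexp : (fun H => nrm H * Dfun s H)
        = fun H => c * (nrm H * Real.log (nrm H) ^ 1)
            + (nrm H * Real.log (nrm H) ^ 0) * W H := by
      funext H; rw [hDW H]; ring
    rw [hexp]
    have := (((hN1 1).const_mul c)).add ((hN1 0).mul hWt)
    simpa using this
  have habs1 : ∀ H : ℝ × ℝ, |H.1| ≤ nrm H := by
    intro H
    rw [nrm, ← Real.sqrt_sq_eq_abs]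
    exact Real.sqrt_le_sqrt (by nlinarith [sq_nonneg H.2])
  have habs2 : ∀ H : ℝ × ℝ, |H.2| ≤ nrm H := by
    intro H
    rw [nrm, ← Real.sqrt_sq_eq_abs]
    exact Real.sqrt_le_sqrt (by nlinarith [sq_nonneg H.1])
  have hDHaux : ∀ (pr : ℝ × ℝ → ℝ), (∀ H, |pr H| ≤ nrm H) →
      Tendsto (fun H => Dfun s H * pr H) l (𝓝 0) := by
    intro pr hpr
    rw [tendsto_zero_iff_norm_tendsto_zero]
    apply squeeze_zero (g := fun H => |nrm H * Dfun s H|) (fun H => norm_nonneg _)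
    · intro H
      have hn : 0 ≤ nrm H := Real.sqrt_nonneg _
      rw [Real.norm_eq_abs, abs_mul, abs_mul, abs_of_nonneg hn]
      exact le_trans (mul_le_mul_of_nonneg_left (hpr H) (abs_nonneg _))
        (le_of_eq (mul_comm _ _))
    · simpa using hND.abs
  have hDH1 : Tendsto (fun H => Dfun s H * H.1) l (𝓝 0) := hDHaux (fun H => H.1) habs1
  have hDH2 : Tendsto (fun H => Dfun s H * H.2) l (𝓝 0) := hDHaux (fun H => H.2) habs2
  have hH1 : Tendsto (fun H : ℝ × ℝ => H.1) l (𝓝 0) :=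
    (continuous_fst.tendsto (0, 0)).mono_left nhdsWithin_le_nhds
  have hH2 : Tendsto (fun H : ℝ × ℝ => H.2) l (𝓝 0) :=
    (continuous_snd.tendsto (0, 0)).mono_left nhdsWithin_le_nhds
  -- limit of Φ
  set b0 : ℝ := pd₂ F₀ (0, 0) with hb0
  have hΦt : Tendsto (stmt9Phi F₀ s) l (𝓝 (-b0 ^ 2 * c ^ 2)) := by
    have h0 : Tendsto (fun H => -(pd₂ F₀ H) ^ 2 * c ^ 2) l (𝓝 (-b0 ^ 2 * c ^ 2)) :=
      (hB.pow 2).neg.mul_const (c ^ 2)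
    have h1 := hqD2.mul ((hA1.mul hB2).sub (hA2.mul hB1))
    have h2 := hDH2.mul ((hB.mul_const c).mul (hB2.sub hA1))
    have h3 := hDH1.mul ((hB.mul_const c).mul (hA2.add hB1))
    have h4 := hqD1.mul (hB.mul
      ((((hA1.neg.mul hW2).add (hA2.mul hW1)).sub (hT1.mul hB2)).add (hT2.mul hB1)))
    have h5 := hH2.mul (((hB.pow 2).mul_const c).mul (hT1.sub hW2))
    have h6 := hH1.mul (((hB.pow 2).mul_const c).mul (hW1.neg.sub hT2))
    have h7 := hq0.mul ((hB.pow 2).mul ((hT1.mul hW2).sub (hT2.mul hW1)))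
    have htot := ((((((h0.add h1).add h2).add h3).add h4).add h5).add h6).add h7
    have hfun : stmt9Phi F₀ s = fun H =>
        -(pd₂ F₀ H) ^ 2 * c ^ 2
        + (H.1 ^ 2 + H.2 ^ 2) * Dfun s H ^ 2
            * (pd₁ (pd₁ F₀) H * pd₂ (pd₂ F₀) H - pd₂ (pd₁ F₀) H * pd₁ (pd₂ F₀) H)
        + Dfun s H * H.2 * (pd₂ F₀ H * c * (pd₂ (pd₂ F₀) H - pd₁ (pd₁ F₀) H))
        + Dfun s H * H.1 * (pd₂ F₀ H * c * (pd₂ (pd₁ F₀) H + pd₁ (pd₂ F₀) H))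
        + (H.1 ^ 2 + H.2 ^ 2) * Dfun s H * (pd₂ F₀ H *
            (-(pd₁ (pd₁ F₀) H) * pd₂ (pd₂ s) H + pd₂ (pd₁ F₀) H * pd₁ (pd₂ s) H
              - pd₁ (pd₁ s) H * pd₂ (pd₂ F₀) H + pd₂ (pd₁ s) H * pd₁ (pd₂ F₀) H))
        + H.2 * (pd₂ F₀ H ^ 2 * c * (pd₁ (pd₁ s) H - pd₂ (pd₂ s) H))
        + H.1 * (pd₂ F₀ H ^ 2 * c * (-(pd₁ (pd₂ s) H) - pd₂ (pd₁ s) H))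
        + (H.1 ^ 2 + H.2 ^ 2) * (pd₂ F₀ H ^ 2
            * (pd₁ (pd₁ s) H * pd₂ (pd₂ s) H - pd₂ (pd₁ s) H * pd₁ (pd₂ s) H)) := by
      funext H; rw [stmt9Phi]
    rw [hfun]
    convert htot using 2
    ring
  -- assemble: det * (q D³) → -b0²c² and q D³ → 0⁻
  have hkey : ∀ᶠ H in l, (Dω F₀ s H).det * ((H.1 ^ 2 + H.2 ^ 2) * Dfun s H ^ 3)
      = stmt9Phi F₀ s H := by
    filter_upwards [hsl, hDneg] with H h1 h2
    exact stmt9_det_key F₀ s hF hs H h1 (ne_of_lt h2)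
  have hdetG : Tendsto (fun H => (Dω F₀ s H).det * ((H.1 ^ 2 + H.2 ^ 2) * Dfun s H ^ 3)) l
      (𝓝 (-b0 ^ 2 * c ^ 2)) := by
    apply hΦt.congr'
    filter_upwards [hkey] with H h
    exact h.symm
  have hGneg : ∀ᶠ H in l, (H.1 ^ 2 + H.2 ^ 2) * Dfun s H ^ 3 < 0 := by
    filter_upwards [hq_pos, hDneg] with H h1 h2
    exact mul_neg_of_pos_of_neg h1 (Odd.pow_neg (by decide) h2)
  have hnegG : Tendsto (fun H => -((H.1 ^ 2 + H.2 ^ 2) * Dfun s H ^ 3)) l (𝓝[>] 0) := by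
    rw [tendsto_nhdsWithin_iff]
    constructor
    · simpa using hqD3.neg
    · filter_upwards [hGneg] with H h
      simpa using h
  have hGinvTop : Tendsto (fun H => (-((H.1 ^ 2 + H.2 ^ 2) * Dfun s H ^ 3))⁻¹) l atTop :=
    tendsto_inv_nhdsGT_zero.comp hnegG
  have hVpos : 0 < -(-b0 ^ 2 * c ^ 2) := by
    have h1 : 0 < b0 ^ 2 := by positivity
    have h3 : 0 < b0 ^ 2 * c ^ 2 := mul_pos h1 (pow_pos hcpos 2)
    linarith
  have hmain := Filter.Tendsto.pos_mul_atTop hVpos hdetG.neg hGinvTop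
  apply hmain.congr'
  filter_upwards [hGneg] with H h
  have hne : (H.1 ^ 2 + H.2 ^ 2) * Dfun s H ^ 3 ≠ 0 := ne_of_lt h
  field_simp
  have hq' : H.1 ^ 2 + H.2 ^ 2 ≠ 0 := left_ne_zero_of_mul hne
  have hD' : Dfun s H ≠ 0 := fun h0 => hne (by rw [h0]; ring)
  rw [mul_assoc, mul_div_assoc, div_self (mul_ne_zero hq' hD'), mul_one]
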